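/- Let β > 0 and ω > 0 be real numbers. Then ∫₀^∞ h_0(t) · exp(−t β² ω²) dt = 1/(2 sinh(β ω)), where h_0(t) = (4π)^{-1/2} t^{-3/2} Σ_{k=0}^∞ (2k+1) · exp(−(2k+1)²/(4t)). -/

import Mathlib

open MeasureTheory

/-- The subordination kernel
`h_0(t) = (4π)^{-1/2} t^{-3/2} Σ_{k≥0} (2k+1) e^{−(2k+1)²/(4t)}`. -/
noncomputable def oddKernel (t : ℝ) : ℝ :=
  (4 * Real.pi) ^ (-(1 : ℝ) / 2) * t ^ (-(3 : ℝ) / 2) *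
    ∑' k : ℕ, (2 * (k : ℝ) + 1) * Real.exp (-(2 * (k : ℝ) + 1) ^ 2 / (4 * t))

open Real Set


lemma phi1_deriv {c u : ℝ} (hu : (0:ℝ) < u) :
    HasDerivAt (fun u : ℝ => u - c / u) (1 + c / u ^ 2) u := by
  have h := ((hasDerivAt_inv (ne_of_gt hu)).const_mul c)
  have h2 := (hasDerivAt_id u).sub h
  exact h2.congr_deriv (by ring)

lemma phi1_image {c : ℝ} (hc : 0 < c) : (fun u : ℝ => u - c / u) '' Ioi 0 = Set.univ := by
  apply eq_univ_of_forall
  intro w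
  set s := Real.sqrt (w ^ 2 + 4 * c) with hs
  have hs2 : s ^ 2 = w ^ 2 + 4 * c := Real.sq_sqrt (by positivity)
  have hsw : |w| < s := by
    rw [← Real.sqrt_sq_eq_abs]
    exact Real.sqrt_lt_sqrt (sq_nonneg w) (by linarith)
  have hu : (0:ℝ) < (w + s) / 2 := by
    have := neg_abs_le w
    linarith [abs_nonneg w]
  refine ⟨(w + s) / 2, hu, ?_⟩
  have hws : (0:ℝ) < w + s := by linarith
  show (w + s) / 2 - c / ((w + s) / 2) = w
  field_simp [ne_of_gt hws]
  nlinarith [hs2]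

lemma phi1_inj {c : ℝ} (hc : 0 < c) : InjOn (fun u : ℝ => u - c / u) (Ioi 0) := by
  intro u hu v hv h
  simp only [mem_Ioi] at hu hv
  simp only at h
  have hu' := ne_of_gt hu
  have hv' := ne_of_gt hv
  field_simp at h
  nlinarith [mul_pos hu hv]

lemma glasser_aux {c : ℝ} (hc : 0 < c) :
    ∫ u in Ioi (0:ℝ), (1 + c / u ^ 2) * Real.exp (-(u - c / u) ^ 2) = Real.sqrt π := by
  have h := integral_image_eq_integral_abs_deriv_smul (f := fun u : ℝ => u - c / u)
      (f' := fun u => 1 + c / u ^ 2) measurableSet_Ioi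
      (fun x hx => (phi1_deriv (c := c) (mem_Ioi.mp hx)).hasDerivWithinAt)
      (phi1_inj hc) (fun w => Real.exp (-w ^ 2))
  rw [phi1_image hc] at h
  rw [Measure.restrict_univ] at h
  have hg : (∫ x : ℝ, Real.exp (-x ^ 2)) = Real.sqrt π := by
    simpa using integral_gaussian 1
  rw [← hg, h]
  apply setIntegral_congr_fun measurableSet_Ioi
  intro u hu
  simp only [mem_Ioi] at hu
  have : |1 + c / u ^ 2| = 1 + c / u ^ 2 := abs_of_pos (by positivity)
  simp [this, smul_eq_mul]

lemma inv_image {c : ℝ} (hc : 0 < c) : (fun u : ℝ => c / u) '' Ioi 0 = Ioi 0 := by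
  apply Subset.antisymm
  · rintro _ ⟨u, hu, rfl⟩
    exact mem_Ioi.mpr (div_pos hc hu)
  · intro v hv
    exact ⟨c / v, mem_Ioi.mpr (div_pos hc hv), by field_simp⟩

lemma integrable_J {c : ℝ} (hc : 0 < c) :
    IntegrableOn (fun u : ℝ => Real.exp (-(u - c / u) ^ 2)) (Ioi 0) := by
  have hcont : ContinuousOn (fun u : ℝ => Real.exp (-(u - c / u) ^ 2)) (Ioi 0) := by
    apply Real.continuous_exp.comp_continuousOn
    apply ContinuousOn.neg
    apply ContinuousOn.pow
    exact continuousOn_id.sub (continuousOn_const.div continuousOn_id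
      (fun x hx => ne_of_gt (mem_Ioi.mp hx)))
  have hb : Integrable (fun u : ℝ => Real.exp (2 * c) * Real.exp (-u ^ 2)) := by
    simpa using (integrable_exp_neg_mul_sq one_pos).const_mul (Real.exp (2 * c))
  apply Integrable.mono' (g := fun u : ℝ => Real.exp (2 * c) * Real.exp (-u ^ 2)) hb.restrict
  · exact hcont.aestronglyMeasurable measurableSet_Ioi
  · filter_upwards [ae_restrict_mem measurableSet_Ioi] with u hu
    have hu' : u ≠ 0 := ne_of_gt (mem_Ioi.mp hu)
    rw [Real.norm_of_nonneg (Real.exp_pos _).le, ← Real.exp_add]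
    apply Real.exp_le_exp.mpr
    have : (u - c / u) ^ 2 = u ^ 2 - 2 * c + (c / u) ^ 2 := by
      field_simp; ring
    nlinarith [sq_nonneg (c / u)]

lemma J_subst {c : ℝ} (hc : 0 < c) :
    ∫ u in Ioi (0:ℝ), (c / u ^ 2) * Real.exp (-(u - c / u) ^ 2)
      = ∫ u in Ioi (0:ℝ), Real.exp (-(u - c / u) ^ 2) := by
  have hderiv : ∀ x ∈ Ioi (0:ℝ), HasDerivWithinAt (fun u : ℝ => c / u) (-(c / x ^ 2)) (Ioi 0) x := by
    intro x hx
    have h := (hasDerivAt_inv (ne_of_gt (mem_Ioi.mp hx))).const_mul c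
    have : c * -(x ^ 2)⁻¹ = -(c / x ^ 2) := by field_simp
    exact (this ▸ h).hasDerivWithinAt
  have hinj : InjOn (fun u : ℝ => c / u) (Ioi 0) := by
    intro u hu v hv h
    simp only [mem_Ioi] at hu hv
    field_simp at h
    exact h.symm
  have h := integral_image_eq_integral_abs_deriv_smul measurableSet_Ioi hderiv hinj
      (fun v => Real.exp (-(v - c / v) ^ 2))
  rw [inv_image hc] at h
  rw [h]
  apply setIntegral_congr_fun measurableSet_Ioi
  intro u hu
  have hu0 : (0:ℝ) < u := mem_Ioi.mp hu
  have h1 : |-(c / u ^ 2)| = c / u ^ 2 := by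
    rw [abs_neg]; exact abs_of_pos (by positivity)
  have h2 : c / (c / u) = u := by field_simp
  simp only [smul_eq_mul, h1, h2]
  ring_nf

lemma integrable_J2 {c : ℝ} (hc : 0 < c) :
    IntegrableOn (fun u : ℝ => (c / u ^ 2) * Real.exp (-(u - c / u) ^ 2)) (Ioi 0) := by
  have hderiv : ∀ x ∈ Ioi (0:ℝ), HasDerivWithinAt (fun u : ℝ => c / u) (-(c / x ^ 2)) (Ioi 0) x := by
    intro x hx
    have h := (hasDerivAt_inv (ne_of_gt (mem_Ioi.mp hx))).const_mul c
    have : c * -(x ^ 2)⁻¹ = -(c / x ^ 2) := by field_simp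
    exact (this ▸ h).hasDerivWithinAt
  have hinj : InjOn (fun u : ℝ => c / u) (Ioi 0) := by
    intro u hu v hv h
    simp only [mem_Ioi] at hu hv
    field_simp at h
    exact h.symm
  have h := integrableOn_image_iff_integrableOn_abs_deriv_smul measurableSet_Ioi hderiv hinj
      (fun v => Real.exp (-(v - c / v) ^ 2))
  rw [inv_image hc] at h
  have := h.mp (integrable_J hc)
  apply this.congr_fun ?_ measurableSet_Ioi
  intro u hu
  have hu0 : (0:ℝ) < u := mem_Ioi.mp hu
  have h1 : |-(c / u ^ 2)| = c / u ^ 2 := by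
    rw [abs_neg]; exact abs_of_pos (by positivity)
  have h2 : c / (c / u) = u := by field_simp
  simp only [smul_eq_mul, h1, h2]
  ring_nf
lemma J_value {c : ℝ} (hc : 0 < c) :
    ∫ u in Ioi (0:ℝ), Real.exp (-(u - c / u) ^ 2) = Real.sqrt π / 2 := by
  have hsplit : ∫ u in Ioi (0:ℝ), (1 + c / u ^ 2) * Real.exp (-(u - c / u) ^ 2)
      = (∫ u in Ioi (0:ℝ), Real.exp (-(u - c / u) ^ 2))
        + ∫ u in Ioi (0:ℝ), (c / u ^ 2) * Real.exp (-(u - c / u) ^ 2) := by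
    rw [← integral_add (integrable_J hc) (integrable_J2 hc)]
    congr 1
    ext u
    ring
  rw [glasser_aux hc, J_subst hc] at hsplit
  linarith

lemma glasser {c : ℝ} (hc : 0 < c) :
    ∫ u in Ioi (0:ℝ), Real.exp (-(u ^ 2 + c ^ 2 / u ^ 2))
      = Real.sqrt π / 2 * Real.exp (-(2 * c)) := by
  have : ∫ u in Ioi (0:ℝ), Real.exp (-(u ^ 2 + c ^ 2 / u ^ 2))
      = ∫ u in Ioi (0:ℝ), Real.exp (-(2 * c)) * Real.exp (-(u - c / u) ^ 2) := by
    apply setIntegral_congr_fun measurableSet_Ioi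
    intro u hu
    have hu0 : u ≠ 0 := ne_of_gt (mem_Ioi.mp hu)
    show Real.exp (-(u ^ 2 + c ^ 2 / u ^ 2)) = Real.exp (-(2 * c)) * Real.exp (-(u - c / u) ^ 2)
    rw [← Real.exp_add]
    congr 1
    field_simp
    ring
  rw [this, integral_const_mul, J_value hc]
  ring

lemma integrable_glasser {c : ℝ} (hc : 0 < c) :
    IntegrableOn (fun u : ℝ => Real.exp (-(u ^ 2 + c ^ 2 / u ^ 2))) (Ioi 0) := by
  have hb : IntegrableOn (fun u : ℝ => Real.exp (-(2 * c)) * Real.exp (-(u - c / u) ^ 2)) (Ioi 0) :=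
    (integrable_J hc).const_mul (Real.exp (-(2 * c)))
  apply hb.congr_fun ?_ measurableSet_Ioi
  intro u hu
  have hu0 : u ≠ 0 := ne_of_gt (mem_Ioi.mp hu)
  show Real.exp (-(2 * c)) * Real.exp (-(u - c / u) ^ 2) = Real.exp (-(u ^ 2 + c ^ 2 / u ^ 2))
  rw [← Real.exp_add]
  congr 1
  field_simp
  ring

section Laplace
variable {a s : ℝ}

lemma phi2_deriv (ha : 0 < a) {u : ℝ} (hu : 0 < u) :
    HasDerivAt (fun u : ℝ => a ^ 2 / (4 * u ^ 2)) (-(a ^ 2 / (2 * u ^ 3))) u := by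
  have h := ((hasDerivAt_pow 2 u).inv (pow_ne_zero 2 hu.ne')).const_mul (a ^ 2 / 4)
  have hfun : (fun u : ℝ => a ^ 2 / 4 * (u ^ 2)⁻¹) = fun u : ℝ => a ^ 2 / (4 * u ^ 2) := by
    funext v
    rw [div_mul_eq_div_div]
    ring
  rw [← hfun]
  refine h.congr_deriv ?_
  have : u ≠ 0 := hu.ne'
  field_simp
  ring

lemma phi2_inj (ha : 0 < a) : InjOn (fun u : ℝ => a ^ 2 / (4 * u ^ 2)) (Ioi 0) := by
  intro u hu v hv h
  simp only [mem_Ioi] at hu hv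
  simp only at h
  have hu' : u ≠ 0 := hu.ne'
  have hv' : v ≠ 0 := hv.ne'
  have ha' : a ≠ 0 := ha.ne'
  have h2 : u ^ 2 = v ^ 2 := by
    field_simp at h
    nlinarith [sq_nonneg a]
  calc u = Real.sqrt (u ^ 2) := (Real.sqrt_sq hu.le).symm
    _ = Real.sqrt (v ^ 2) := by rw [h2]
    _ = v := Real.sqrt_sq hv.le

lemma phi2_image (ha : 0 < a) : (fun u : ℝ => a ^ 2 / (4 * u ^ 2)) '' Ioi 0 = Ioi 0 := by
  apply Subset.antisymm
  · rintro _ ⟨u, hu, rfl⟩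
    have hu' : (0:ℝ) < u := mem_Ioi.mp hu
    exact mem_Ioi.mpr (by positivity)
  · intro t ht
    have ht0 : (0:ℝ) < t := ht
    have hst : (0:ℝ) < Real.sqrt t := Real.sqrt_pos.mpr ht0
    refine ⟨a / (2 * Real.sqrt t), mem_Ioi.mpr (div_pos ha (by linarith : (0:ℝ) < 2 * Real.sqrt t)), ?_⟩
    show a ^ 2 / (4 * (a / (2 * Real.sqrt t)) ^ 2) = t
    have hsq : Real.sqrt t ^ 2 = t := Real.sq_sqrt ht0.le
    field_simp
    nlinarith [hsq]

lemma phi2_point (ha : 0 < a) {u : ℝ} (hu : 0 < u) :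
    a ^ 2 / (2 * u ^ 3) * (a ^ 2 / (4 * u ^ 2)) ^ (-(3:ℝ)/2) = 4 / a := by
  have hx : a ^ 2 / (4 * u ^ 2) = (a / (2 * u)) ^ 2 := by
    field_simp
    ring
  have hx0 : (0:ℝ) < a / (2 * u) := by positivity
  rw [hx, ← Real.rpow_natCast (a / (2 * u)) 2, ← Real.rpow_mul hx0.le]
  norm_num
  have : u ≠ 0 := hu.ne'
  have : a ≠ 0 := ha.ne'
  field_simp
  ring

lemma laplace_pointwise (ha : 0 < a) (hs : 0 < s) {u : ℝ} (hu : 0 < u) :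
    |(-(a ^ 2 / (2 * u ^ 3)))| • ((a ^ 2 / (4 * u ^ 2)) ^ (-(3:ℝ)/2)
        * Real.exp (-(a ^ 2 / (4 * (a ^ 2 / (4 * u ^ 2)))))
        * Real.exp (-(a ^ 2 / (4 * u ^ 2) * s ^ 2)))
      = (4 / a) * Real.exp (-(u ^ 2 + (a * s / 2) ^ 2 / u ^ 2)) := by
  have hu' : u ≠ 0 := hu.ne'
  have ha' : a ≠ 0 := ha.ne'
  have h1 : |(-(a ^ 2 / (2 * u ^ 3)))| = a ^ 2 / (2 * u ^ 3) := by
    rw [abs_neg]; exact abs_of_pos (by positivity)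
  have h2 : a ^ 2 / (4 * (a ^ 2 / (4 * u ^ 2))) = u ^ 2 := by field_simp
  have h3 : a ^ 2 / (4 * u ^ 2) * s ^ 2 = (a * s / 2) ^ 2 / u ^ 2 := by
    field_simp; ring
  rw [smul_eq_mul, h1, h2, h3]
  have := phi2_point ha hu
  calc a ^ 2 / (2 * u ^ 3) * ((a ^ 2 / (4 * u ^ 2)) ^ (-(3:ℝ)/2)
        * Real.exp (-u ^ 2) * Real.exp (-((a * s / 2) ^ 2 / u ^ 2)))
      = (a ^ 2 / (2 * u ^ 3) * (a ^ 2 / (4 * u ^ 2)) ^ (-(3:ℝ)/2))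
        * (Real.exp (-u ^ 2) * Real.exp (-((a * s / 2) ^ 2 / u ^ 2))) := by ring
    _ = (4 / a) * Real.exp (-(u ^ 2 + (a * s / 2) ^ 2 / u ^ 2)) := by
        rw [this, ← Real.exp_add]; ring_nf

lemma laplace_integral (ha : 0 < a) (hs : 0 < s) :
    ∫ t in Ioi (0:ℝ), t ^ (-(3:ℝ)/2) * Real.exp (-(a ^ 2 / (4 * t))) * Real.exp (-(t * s ^ 2))
      = 2 * Real.sqrt π / a * Real.exp (-(a * s)) := by
  have h := integral_image_eq_integral_abs_deriv_smul (f := fun u : ℝ => a ^ 2 / (4 * u ^ 2))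
      (f' := fun u => -(a ^ 2 / (2 * u ^ 3))) measurableSet_Ioi
      (fun x hx => (phi2_deriv ha (mem_Ioi.mp hx)).hasDerivWithinAt)
      (phi2_inj ha)
      (fun t => t ^ (-(3:ℝ)/2) * Real.exp (-(a ^ 2 / (4 * t))) * Real.exp (-(t * s ^ 2)))
  rw [phi2_image ha] at h
  rw [h]
  have hc : (0:ℝ) < a * s / 2 := by positivity
  have heq : ∫ u in Ioi (0:ℝ), |(-(a ^ 2 / (2 * u ^ 3)))| •
        ((fun t : ℝ => t ^ (-(3:ℝ)/2) * Real.exp (-(a ^ 2 / (4 * t))) * Real.exp (-(t * s ^ 2)))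
          (a ^ 2 / (4 * u ^ 2)))
      = ∫ u in Ioi (0:ℝ), (4 / a) * Real.exp (-(u ^ 2 + (a * s / 2) ^ 2 / u ^ 2)) := by
    apply setIntegral_congr_fun measurableSet_Ioi
    intro u hu
    have : a ^ 2 / (4 * u ^ 2) * s ^ 2 = a ^ 2 / (4 * u ^ 2) * s ^ 2 := rfl
    simpa using laplace_pointwise ha hs (mem_Ioi.mp hu)
  rw [heq, integral_const_mul, glasser hc]
  rw [show -(2 * (a * s / 2)) = -(a * s) by ring]
  field_simp
  ring

lemma laplace_integrableOn (ha : 0 < a) (hs : 0 < s) :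
    IntegrableOn (fun t : ℝ => t ^ (-(3:ℝ)/2) * Real.exp (-(a ^ 2 / (4 * t)))
      * Real.exp (-(t * s ^ 2))) (Ioi 0) := by
  have h := integrableOn_image_iff_integrableOn_abs_deriv_smul (f := fun u : ℝ => a ^ 2 / (4 * u ^ 2))
      (f' := fun u => -(a ^ 2 / (2 * u ^ 3))) measurableSet_Ioi
      (fun x hx => (phi2_deriv ha (mem_Ioi.mp hx)).hasDerivWithinAt)
      (phi2_inj ha)
      (fun t => t ^ (-(3:ℝ)/2) * Real.exp (-(a ^ 2 / (4 * t))) * Real.exp (-(t * s ^ 2)))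
  rw [phi2_image ha] at h
  rw [h]
  have hc : (0:ℝ) < a * s / 2 := by positivity
  have hb : IntegrableOn (fun u : ℝ => (4 / a) * Real.exp (-(u ^ 2 + (a * s / 2) ^ 2 / u ^ 2))) (Ioi 0) :=
    (integrable_glasser hc).const_mul (4 / a)
  apply hb.congr_fun ?_ measurableSet_Ioi
  intro u hu
  exact (laplace_pointwise ha hs (mem_Ioi.mp hu)).symm

end Laplace

lemma geom_sum_sinh {x : ℝ} (hx : 0 < x) :
    ∑' k : ℕ, Real.exp (-((2 * (k:ℝ) + 1) * x)) = 1 / (2 * Real.sinh x) := by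
  have hterm : ∀ k : ℕ, Real.exp (-((2 * (k:ℝ) + 1) * x))
      = Real.exp (-x) * (Real.exp (-(2 * x))) ^ k := by
    intro k
    rw [← Real.exp_nat_mul, ← Real.exp_add]
    congr 1
    push_cast
    ring
  have hr1 : Real.exp (-(2 * x)) < 1 := Real.exp_lt_one_iff.mpr (by linarith)
  have hr0 : (0:ℝ) ≤ Real.exp (-(2 * x)) := (Real.exp_pos _).le
  calc ∑' k : ℕ, Real.exp (-((2 * (k:ℝ) + 1) * x))
      = ∑' k : ℕ, Real.exp (-x) * (Real.exp (-(2 * x))) ^ k := tsum_congr hterm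
    _ = Real.exp (-x) * (1 - Real.exp (-(2 * x)))⁻¹ := by
        rw [tsum_mul_left, tsum_geometric_of_lt_one hr0 hr1]
    _ = 1 / (2 * Real.sinh x) := by
        rw [Real.sinh_eq]
        have h1 : (1 : ℝ) - Real.exp (-(2 * x)) ≠ 0 := by linarith
        have h2 : Real.exp x ≠ 0 := (Real.exp_pos x).ne'
        have h3 : Real.exp x - Real.exp (-x) ≠ 0 := by
          have : Real.exp (-x) < Real.exp x := Real.exp_lt_exp.mpr (by linarith)
          linarith
        field_simp
        rw [mul_sub, ← Real.exp_add, ← Real.exp_add]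
        norm_num
        rw [show -x + -x = -(2*x) by ring]
        rw [mul_comm x 2, div_self h1]

lemma summable_odd_exp {x : ℝ} (hx : 0 < x) :
    Summable fun k : ℕ => Real.exp (-((2 * (k:ℝ) + 1) * x)) := by
  have hr1 : Real.exp (-(2 * x)) < 1 := Real.exp_lt_one_iff.mpr (by linarith)
  have hr0 : (0:ℝ) ≤ Real.exp (-(2 * x)) := (Real.exp_pos _).le
  apply Summable.congr ((summable_geometric_of_lt_one hr0 hr1).mul_left (Real.exp (-x)))
  intro k
  rw [← Real.exp_nat_mul, ← Real.exp_add]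
  congr 1
  push_cast
  ring

lemma const_val : (4 * Real.pi) ^ (-(1:ℝ)/2) * (2 * Real.sqrt Real.pi) = 1 := by
  have hpi : (0:ℝ) < Real.pi := Real.pi_pos
  have hs : (0:ℝ) < Real.sqrt Real.pi := Real.sqrt_pos.mpr hpi
  have h4 : (4 * Real.pi) = (2 * Real.sqrt Real.pi) ^ 2 := by
    rw [mul_pow, Real.sq_sqrt hpi.le]
    norm_num
  rw [h4, ← Real.rpow_natCast (2 * Real.sqrt Real.pi) 2, ← Real.rpow_mul (by positivity)]
  norm_num
  rw [Real.rpow_neg_one]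
  field_simp


/-- For `β > 0` and `ω > 0`,
`∫₀^∞ h_0(t) e^{−tβ²ω²} dt = 1/(2 sinh(βω))`. -/
theorem odd_kernel_subordination (β ω : ℝ) (hβ : 0 < β) (hω : 0 < ω) :
    ∫ t in Set.Ioi (0 : ℝ), oddKernel t * Real.exp (-t * β ^ 2 * ω ^ 2)
      = 1 / (2 * Real.sinh (β * ω)) := by
  set x : ℝ := β * ω with hxdef
  have hx : 0 < x := mul_pos hβ hω
  set C : ℝ := (4 * Real.pi) ^ (-(1:ℝ)/2) with hC
  have hC0 : 0 ≤ C := Real.rpow_nonneg (by positivity) _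
  set g : ℕ → ℝ → ℝ := fun k t =>
    (C * (2 * (k:ℝ) + 1)) * (t ^ (-(3:ℝ)/2) * Real.exp (-((2 * (k:ℝ) + 1) ^ 2 / (4 * t)))
      * Real.exp (-(t * x ^ 2))) with hg
  have hpt : ∀ t ∈ Ioi (0:ℝ), oddKernel t * Real.exp (-t * β ^ 2 * ω ^ 2) = ∑' k, g k t := by
    intro t ht
    have ht0 : (0:ℝ) < t := ht
    rw [oddKernel]
    have h1 : (4 * Real.pi) ^ (-(1:ℝ)/2) * t ^ (-(3:ℝ)/2)
          * (∑' k : ℕ, (2 * (k:ℝ) + 1) * Real.exp (-(2 * (k:ℝ) + 1) ^ 2 / (4 * t)))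
          * Real.exp (-t * β ^ 2 * ω ^ 2)
        = (C * t ^ (-(3:ℝ)/2) * Real.exp (-t * β ^ 2 * ω ^ 2))
          * ∑' k : ℕ, (2 * (k:ℝ) + 1) * Real.exp (-(2 * (k:ℝ) + 1) ^ 2 / (4 * t)) := by
      rw [hC]; ring
    rw [h1, ← tsum_mul_left]
    apply tsum_congr
    intro k
    rw [hg]
    have e1 : -t * β ^ 2 * ω ^ 2 = -(t * x ^ 2) := by rw [hxdef]; ring
    have e2 : -(2 * (k:ℝ) + 1) ^ 2 / (4 * t) = -((2 * (k:ℝ) + 1) ^ 2 / (4 * t)) := neg_div _ _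
    rw [e1, e2]
    ring
  have hak : ∀ k : ℕ, (0:ℝ) < 2 * (k:ℝ) + 1 := fun k => by positivity
  have hint : ∀ k : ℕ, Integrable (g k) (volume.restrict (Ioi 0)) := by
    intro k
    exact (laplace_integrableOn (hak k) hx).const_mul _
  have hval : ∀ k : ℕ, ∫ t in Ioi (0:ℝ), g k t = Real.exp (-((2 * (k:ℝ) + 1) * x)) := by
    intro k
    rw [hg]
    simp only
    rw [integral_const_mul, laplace_integral (hak k) hx]
    have : C * (2 * (k:ℝ) + 1) * (2 * Real.sqrt Real.pi / (2 * (k:ℝ) + 1)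
          * Real.exp (-((2 * (k:ℝ) + 1) * x)))
        = (C * (2 * Real.sqrt Real.pi)) * Real.exp (-((2 * (k:ℝ) + 1) * x)) := by
      field_simp
    rw [this, const_val, one_mul]
  have hnonneg : ∀ k : ℕ, ∀ t ∈ Ioi (0:ℝ), 0 ≤ g k t := by
    intro k t ht
    have ht0 : (0:ℝ) < t := ht
    rw [hg]
    have : (0:ℝ) ≤ t ^ (-(3:ℝ)/2) := Real.rpow_nonneg ht0.le _
    positivity
  have hnorm : ∀ k : ℕ, ∫ t in Ioi (0:ℝ), ‖g k t‖ = Real.exp (-((2 * (k:ℝ) + 1) * x)) := by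
    intro k
    rw [← hval k]
    apply setIntegral_congr_fun measurableSet_Ioi
    intro t ht
    exact Real.norm_of_nonneg (hnonneg k t ht)
  have hsum : Summable fun k : ℕ => ∫ t, ‖g k t‖ ∂(volume.restrict (Ioi 0)) :=
    (summable_odd_exp hx).congr fun k => (hnorm k).symm
  calc ∫ t in Ioi (0:ℝ), oddKernel t * Real.exp (-t * β ^ 2 * ω ^ 2)
      = ∫ t in Ioi (0:ℝ), ∑' k, g k t := setIntegral_congr_fun measurableSet_Ioi hpt
    _ = ∑' k, ∫ t in Ioi (0:ℝ), g k t :=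
        (integral_tsum_of_summable_integral_norm hint hsum).symm
    _ = ∑' k : ℕ, Real.exp (-((2 * (k:ℝ) + 1) * x)) := tsum_congr hval
    _ = 1 / (2 * Real.sinh x) := geom_sum_sinh hx
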